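/- Suppose θ = 1, ρ = σ = c with c ∈ (0, 2), rs‖ℒ‖² < 1, and w* = (u₀*, p*) ∈ W is a saddle point. Let sequences (w^k) and (w̃^k) in W satisfy, for every k, the prediction variational inequality φ(u₀) − φ(ũ₀^k) + ⟨w − w̃^k, F(w̃^k) + G(w̃^k − w^k)⟩ ≥ 0 for all w = (u₀, p) ∈ W (with θ = 1 in G), and the correction step w^{k+1} = w^k − c(w^k − w̃^k). For K ∈ ℕ define w_K = (1/(K+1)) Σ_{k=0}^K w̃^k and u_{0,K} = (1/(K+1)) Σ_{k=0}^K ũ₀^k. Then φ(u_{0,K}) − φ(u₀*) + ⟨w_K − w*, F(w*)⟩ ≤ ‖w⁰ − w*‖²_G / (2(K+1)c), where ‖w‖²_G = ⟨Gw, w⟩ with θ = 1 in G. -/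

import Mathlib

open scoped InnerProductSpace RealInnerProductSpace

noncomputable section

/-- The product space `W = H × H` equipped with the Hilbert space structure
`⟨(u,p),(u',p')⟩ = ⟨u,u'⟩ + ⟨p,p'⟩`. -/
abbrev W (H : Type*) [NormedAddCommGroup H] [InnerProductSpace ℝ H] := WithLp 2 (H × H)

/-- The canonical (linear homeomorphism) identification of `W` with the plain product. -/
def eW (H : Type*) [NormedAddCommGroup H] [InnerProductSpace ℝ H] :
    W H ≃L[ℝ] H × H := WithLp.prodContinuousLinearEquiv 2 ℝ H H

variable {H : Type*} [NormedAddCommGroup H] [InnerProductSpace ℝ H] [CompleteSpace H]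

/-- The block diagonal operator `D(u,p) = (ρu, σp)` on `W`. -/
def opD (H : Type*) [NormedAddCommGroup H] [InnerProductSpace ℝ H] (ρ σ : ℝ) :
    W H →L[ℝ] W H :=
  ((eW H).symm.toContinuousLinearMap.comp
    ((ρ • ContinuousLinearMap.fst ℝ H H).prod (σ • ContinuousLinearMap.snd ℝ H H))).comp
    (eW H).toContinuousLinearMap

/-- The block operator `G(u,p) = ((1/r)u − ℒ*p, −θℒu + (1/s)p)` on `W`. -/
def opG (L : H →L[ℝ] H) (r s θ : ℝ) : W H →L[ℝ] W H :=
  ((eW H).symm.toContinuousLinearMap.comp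
    (((1 / r) • ContinuousLinearMap.fst ℝ H H
        - (ContinuousLinearMap.adjoint L).comp (ContinuousLinearMap.snd ℝ H H)).prod
      ((-θ) • (L.comp (ContinuousLinearMap.fst ℝ H H))
        + (1 / s) • ContinuousLinearMap.snd ℝ H H))).comp
    (eW H).toContinuousLinearMap

/-- The operator `K = G ∘ D⁻¹`. -/
def opK (L : H →L[ℝ] H) (r s θ ρ σ : ℝ) : W H →L[ℝ] W H :=
  (opG L r s θ).comp (opD H ρ⁻¹ σ⁻¹)

/-- The operator `N = G + G* − D* ∘ K ∘ D`. -/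
def opN (L : H →L[ℝ] H) (r s θ ρ σ : ℝ) : W H →L[ℝ] W H :=
  opG L r s θ + ContinuousLinearMap.adjoint (opG L r s θ)
    - ((ContinuousLinearMap.adjoint (opD H ρ σ)).comp
        ((opK L r s θ ρ σ).comp (opD H ρ σ)))

/-- The map `F(u₀, p) = (τu₀ + ℒ*p, p − ℒu₀ + u_T)` on `W`. -/
def Fmap (L : H →L[ℝ] H) (uT : H) (τ : ℝ) : W H → W H := fun w =>
  (eW H).symm (τ • ((eW H) w).1 + ContinuousLinearMap.adjoint L ((eW H) w).2,
               ((eW H) w).2 - L ((eW H) w).1 + uT)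

/-- `‖w‖²_A = ⟨Aw, w⟩` for an operator `A` on `W`. -/
def normSq (A : W H →L[ℝ] W H) (w : W H) : ℝ := ⟪A w, w⟫_ℝ

/-- A saddle point `w* = (u₀*, p*)`: `φ(u₀) − φ(u₀*) + ⟨w − w*, F(w*)⟩ ≥ 0` for all `w`. -/
def IsSaddle (L : H →L[ℝ] H) (uT : H) (τ : ℝ) (φ : H → ℝ) (wstar : W H) : Prop :=
  ∀ w : W H, φ ((eW H w).1) - φ ((eW H wstar).1)
      + ⟪w - wstar, Fmap L uT τ wstar⟫_ℝ ≥ 0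

/-- The prediction variational inequality satisfied by `w̃` given `wᵏ`:
`φ(u₀) − φ(ũ₀) + ⟨w − w̃, F(w̃) + G(w̃ − wᵏ)⟩ ≥ 0` for all `w`. -/
def PredVI (L : H →L[ℝ] H) (uT : H) (τ : ℝ) (φ : H → ℝ) (r s θ : ℝ)
    (wk wt : W H) : Prop :=
  ∀ w : W H, φ ((eW H w).1) - φ ((eW H wt).1)
      + ⟪w - wt, Fmap L uT τ wt + opG L r s θ (wt - wk)⟫_ℝ ≥ 0

end

/-!
Write `Q k = ‖wᵏ - w*‖²_G`. For `θ = 1` the operator `G` is symmetric, and positive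
semidefinite as soon as `rs‖ℒ‖² ≤ 1`, so the correction step gives
`Q k - Q (k+1) = 2c⟨G(wᵏ - w̃ᵏ), wᵏ - w*⟩ - c²‖wᵏ - w̃ᵏ‖²_G`. Testing the prediction inequality
at `w*` and using the monotonicity of `F` together with `c ≤ 2` bounds the gap
`φ(ũ₀ᵏ) - φ(u₀*) + ⟨w̃ᵏ - w*, F(w*)⟩` by `(Q k - Q (k+1)) / (2c)`. The gap is a convex function of
`w̃`, so by Jensen the gap of the average is at most the average of these telescoping bounds,
which is at most `Q 0 / (2(K+1)c)`.
-/

lemma ConvexOn.map_average_range_le {E : Type*} [AddCommGroup E] [Module ℝ E] {f : E → ℝ}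
    (hf : ConvexOn ℝ Set.univ f) (z : ℕ → E) (M : ℕ) :
    f (((M : ℝ) + 1)⁻¹ • ∑ k ∈ Finset.range (M + 1), z k)
      ≤ ((M : ℝ) + 1)⁻¹ * ∑ k ∈ Finset.range (M + 1), f (z k) := by
  simpa [Finset.centerMass, add_comm] using hf.map_centerMass_le (t := Finset.range (M + 1))
    (w := fun _ => (1 : ℝ)) (p := z) (by simp) (by positivity) (by simp)

section VariationalInequality

variable {E : Type*} [NormedAddCommGroup E] [InnerProductSpace ℝ E]

lemma inner_map_sub_smul_self_of_isSymmetric {G : E →L[ℝ] E}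
    (hG : G.IsSymmetric) (x d : E) (c : ℝ) :
    ⟪G (x - c • d), x - c • d⟫ = ⟪G x, x⟫ - 2 * c * ⟪G d, x⟫ + c ^ 2 * ⟪G d, d⟫ := by
  have hxd : ⟪G x, d⟫ = ⟪G d, x⟫ := by rw [real_inner_comm]; exact (hG d x).symm
  simp only [map_sub, map_smul, inner_sub_left, inner_sub_right, real_inner_smul_left,
    real_inner_smul_right, hxd, real_inner_comm x (G d)]
  ring

def viGap (f : E → ℝ) (F : E → E) (v x : E) : ℝ := f x - f v + ⟪x - v, F v⟫

variable {G : E →L[ℝ] E} {f : E → ℝ} {F : E → E} {v w w' wt : E} {c : ℝ}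

lemma convexOn_viGap (hf : ConvexOn ℝ Set.univ f) (F : E → E) (v : E) :
    ConvexOn ℝ Set.univ (viGap f F v) := by
  have h : viGap f F v = f + fun x => innerₗ E (F v) x + (-⟪v, F v⟫ - f v) := by
    ext x
    rw [viGap, inner_sub_left, Pi.add_apply, innerₗ_apply_apply, real_inner_comm]
    ring
  rw [h]
  exact hf.add (((innerₗ E (F v)).convexOn convex_univ).add_const _)

lemma viGap_le_of_prediction_correction (hG : G.IsPositive) (hF : 0 ≤ ⟪wt - v, F wt - F v⟫)
    (hVI : 0 ≤ f v - f wt + ⟪v - wt, F wt + G (wt - w)⟫)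
    (hw' : w' = w - c • (w - wt)) (hc : 0 < c) (hc2 : c ≤ 2) :
    viGap f F v wt ≤ (⟪G (w - v), w - v⟫ - ⟪G (w' - v), w' - v⟫) / (2 * c) := by
  have hw'v : w' - v = (w - v) - c • (w - wt) := by rw [hw']; abel
  have hG_step : ⟪v - wt, G (wt - w)⟫ = ⟪G (w - wt), w - v⟫ - ⟪G (w - wt), w - wt⟫ := by
    rw [show v - wt = (w - wt) - (w - v) by abel, ← neg_sub w wt, map_neg, inner_neg_right,
      inner_sub_left, real_inner_comm (w - wt), real_inner_comm (w - v)]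
    ring
  have hF_step : ⟪wt - v, F v⟫ ≤ -⟪v - wt, F wt⟫ := by
    rw [inner_sub_right] at hF
    linarith [show ⟪wt - v, F wt⟫ = -⟪v - wt, F wt⟫ by rw [← inner_neg_left, neg_sub]]
  have hGd : 0 ≤ c * (2 - c) * ⟪G (w - wt), w - wt⟫ :=
    mul_nonneg (mul_nonneg hc.le (by linarith)) (hG.inner_nonneg_left _)
  rw [inner_add_right, hG_step] at hVI
  rw [hw'v, inner_map_sub_smul_self_of_isSymmetric hG.isSymmetric, le_div_iff₀ (by positivity),
    viGap]
  nlinarith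

lemma viGap_average_le_of_prediction_correction (hG : G.IsPositive) (hf : ConvexOn ℝ Set.univ f)
    (hF : ∀ a b, 0 ≤ ⟪a - b, F a - F b⟫) (w wt : ℕ → E)
    (hVI : ∀ k, 0 ≤ f v - f (wt k) + ⟪v - wt k, F (wt k) + G (wt k - w k)⟫)
    (hcorr : ∀ k, w (k + 1) = w k - c • (w k - wt k)) (hc : 0 < c) (hc2 : c ≤ 2) (M : ℕ) :
    viGap f F v (((M : ℝ) + 1)⁻¹ • ∑ k ∈ Finset.range (M + 1), wt k)
      ≤ ⟪G (w 0 - v), w 0 - v⟫ / (2 * ((M : ℝ) + 1) * c) := by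
  set Q : ℕ → ℝ := fun k => ⟪G (w k - v), w k - v⟫
  have step k : viGap f F v (wt k) ≤ (Q k - Q (k + 1)) / (2 * c) :=
    viGap_le_of_prediction_correction hG (hF _ _) (hVI k) (hcorr k) hc hc2
  calc viGap f F v (((M : ℝ) + 1)⁻¹ • ∑ k ∈ Finset.range (M + 1), wt k)
      ≤ ((M : ℝ) + 1)⁻¹ * ∑ k ∈ Finset.range (M + 1), viGap f F v (wt k) :=
        (convexOn_viGap hf F v).map_average_range_le wt M
    _ ≤ ((M : ℝ) + 1)⁻¹ * ∑ k ∈ Finset.range (M + 1), (Q k - Q (k + 1)) / (2 * c) := by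
        gcongr with k; exact step k
    _ = ((M : ℝ) + 1)⁻¹ * ((Q 0 - Q (M + 1)) / (2 * c)) := by
        rw [← Finset.sum_div, Finset.sum_range_sub']
    _ ≤ ((M : ℝ) + 1)⁻¹ * (Q 0 / (2 * c)) := by
        gcongr; linarith [hG.inner_nonneg_left (w (M + 1) - v)]
    _ = Q 0 / (2 * ((M : ℝ) + 1) * c) := by field_simp

end VariationalInequality

lemma two_mul_le_inv_mul_sq_add_inv_mul_sq {r s n x y t : ℝ} (hr : 0 < r) (hs : 0 < s)
    (hrs : r * s * n ^ 2 ≤ 1) (ht : t ≤ n * x * y) : 2 * t ≤ r⁻¹ * x ^ 2 + s⁻¹ * y ^ 2 := by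
  rw [← sub_nonneg]
  calc 0 ≤ (s * (x - r * n * y) ^ 2 + r * y ^ 2 * (1 - r * s * n ^ 2)) / (r * s) :=
        div_nonneg (add_nonneg (by positivity) (mul_nonneg (by positivity) (by linarith)))
          (by positivity)
    _ = r⁻¹ * x ^ 2 - 2 * (n * x * y) + s⁻¹ * y ^ 2 := by field_simp; ring
    _ ≤ r⁻¹ * x ^ 2 + s⁻¹ * y ^ 2 - 2 * t := by linarith

section PrimalDual

open ContinuousLinearMap

variable {H : Type*} [NormedAddCommGroup H] [InnerProductSpace ℝ H] [CompleteSpace H]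

lemma inner_opG_apply (L : H →L[ℝ] H) (r s θ : ℝ) (a b : W H) :
    ⟪opG L r s θ a, b⟫ = r⁻¹ * ⟪a.fst, b.fst⟫ - ⟪a.snd, L b.fst⟫ - θ * ⟪L a.fst, b.snd⟫
      + s⁻¹ * ⟪a.snd, b.snd⟫ := by
  change ⟪(1 / r) • a.fst - adjoint L a.snd, b.fst⟫ + ⟪(-θ) • L a.fst + (1 / s) • a.snd, b.snd⟫
    = _
  rw [inner_sub_left, inner_add_left, real_inner_smul_left, real_inner_smul_left,
    real_inner_smul_left, adjoint_inner_left, one_div, one_div]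
  ring

lemma opG_one_isSymmetric (L : H →L[ℝ] H) (r s : ℝ) : (opG L r s 1).IsSymmetric := by
  intro a b
  change ⟪opG L r s 1 a, b⟫ = ⟪a, opG L r s 1 b⟫
  rw [real_inner_comm _ a, inner_opG_apply, inner_opG_apply, real_inner_comm a.fst,
    real_inner_comm a.snd b.snd, real_inner_comm (L a.fst), real_inner_comm a.snd (L b.fst)]
  ring

lemma opG_one_isPositive (L : H →L[ℝ] H) {r s : ℝ} (hr : 0 < r) (hs : 0 < s)
    (hrs : r * s * ‖L‖ ^ 2 ≤ 1) : (opG L r s 1).IsPositive := by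
  refine (isPositive_iff _).2 ⟨opG_one_isSymmetric L r s, fun a => ?_⟩
  have hL : ⟪L a.fst, a.snd⟫ ≤ ‖L‖ * ‖a.fst‖ * ‖a.snd‖ :=
    (real_inner_le_norm _ _).trans (mul_le_mul_of_nonneg_right (L.le_opNorm _) (norm_nonneg _))
  have := two_mul_le_inv_mul_sq_add_inv_mul_sq hr hs hrs hL
  rw [inner_opG_apply, real_inner_self_eq_norm_sq, real_inner_self_eq_norm_sq,
    real_inner_comm (L a.fst)]
  linarith

lemma inner_sub_Fmap_sub (L : H →L[ℝ] H) (uT : H) (τ : ℝ) (a b : W H) :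
    ⟪a - b, Fmap L uT τ a - Fmap L uT τ b⟫ = τ * ‖a.fst - b.fst‖ ^ 2 + ‖a.snd - b.snd‖ ^ 2 := by
  change ⟪a.fst - b.fst, (τ • a.fst + adjoint L a.snd) - (τ • b.fst + adjoint L b.snd)⟫
    + ⟪a.snd - b.snd, (a.snd - L a.fst + uT) - (b.snd - L b.fst + uT)⟫ = _
  rw [add_sub_add_comm, ← smul_sub, ← map_sub, add_sub_add_right_eq_sub, sub_sub_sub_comm,
    ← map_sub, inner_add_right, inner_sub_right, real_inner_smul_right, adjoint_inner_right,
    real_inner_self_eq_norm_sq, real_inner_self_eq_norm_sq, real_inner_comm (a.snd - b.snd)]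
  ring

end PrimalDual

theorem ergodic_rate_theta_one_general
    {H : Type*} [NormedAddCommGroup H] [InnerProductSpace ℝ H] [CompleteSpace H]
    (L : H →L[ℝ] H) (uT : H) (τ : ℝ) (hτ : 0 < τ)
    (φ : H → ℝ) (hφ : ConvexOn ℝ Set.univ φ)
    (r s c : ℝ) (hr : 0 < r) (hs : 0 < s)
    (hc : c ∈ Set.Ioo (0 : ℝ) 2) (hrs : r * s * ‖L‖ ^ 2 < 1)
    (wstar : W H)
    (w wt : ℕ → W H)
    (hVI : ∀ k : ℕ, PredVI L uT τ φ r s 1 (w k) (wt k))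
    (hcorr : ∀ k : ℕ, w (k + 1) = w k - c • (w k - wt k)) :
    ∀ M : ℕ,
      φ (((M : ℝ) + 1)⁻¹ • ∑ k ∈ Finset.range (M + 1), (eW H (wt k)).1)
          - φ ((eW H wstar).1)
          + ⟪(((M : ℝ) + 1)⁻¹ • ∑ k ∈ Finset.range (M + 1), wt k) - wstar,
              Fmap L uT τ wstar⟫_ℝ
        ≤ normSq (opG L r s 1) (w 0 - wstar) / (2 * ((M : ℝ) + 1) * c) := by
  intro M
  have hf : ConvexOn ℝ Set.univ fun x : W H => φ (eW H x).1 :=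
    hφ.comp_linearMap ((LinearMap.fst ℝ H H).comp (eW H).toLinearMap)
  have hF (a b : W H) : 0 ≤ ⟪a - b, Fmap L uT τ a - Fmap L uT τ b⟫ := by
    rw [inner_sub_Fmap_sub]; positivity
  have havg : (eW H (((M : ℝ) + 1)⁻¹ • ∑ k ∈ Finset.range (M + 1), wt k)).1
      = ((M : ℝ) + 1)⁻¹ • ∑ k ∈ Finset.range (M + 1), (eW H (wt k)).1 := by
    simp [map_sum, Prod.fst_sum]
  rw [← havg]
  exact viGap_average_le_of_prediction_correction (opG_one_isPositive L hr hs hrs.le) hf hF w wt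
    (fun k => hVI k wstar) hcorr hc.1 hc.2.le M

/-- Ergodic rate for `θ = 1`, `ρ = σ = c ∈ (0,2)` and `rs‖ℒ‖² < 1`:
`φ(u_{0,M}) − φ(u₀*) + ⟨w_M − w*, F(w*)⟩ ≤ ‖w⁰ − w*‖²_G / (2(M+1)c)`. -/
theorem ergodic_rate_theta_one
    {H : Type*} [NormedAddCommGroup H] [InnerProductSpace ℝ H] [CompleteSpace H]
    (L : H →L[ℝ] H) (uT : H) (τ β : ℝ) (hτ : 0 < τ) (hβ : 0 ≤ β)
    (φ : H → ℝ) (hφ : ConvexOn ℝ Set.univ φ)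
    (r s c : ℝ) (hr : 0 < r) (hs : 0 < s)
    (hc : c ∈ Set.Ioo (0 : ℝ) 2) (hrs : r * s * ‖L‖ ^ 2 < 1)
    (wstar : W H) (hstar : IsSaddle L uT τ φ wstar)
    (w wt : ℕ → W H)
    (hVI : ∀ k : ℕ, PredVI L uT τ φ r s 1 (w k) (wt k))
    (hcorr : ∀ k : ℕ, w (k + 1) = w k - c • (w k - wt k)) :
    ∀ M : ℕ,
      φ (((M : ℝ) + 1)⁻¹ • ∑ k ∈ Finset.range (M + 1), (eW H (wt k)).1)
          - φ ((eW H wstar).1)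
          + ⟪(((M : ℝ) + 1)⁻¹ • ∑ k ∈ Finset.range (M + 1), wt k) - wstar,
              Fmap L uT τ wstar⟫_ℝ
        ≤ normSq (opG L r s 1) (w 0 - wstar) / (2 * ((M : ℝ) + 1) * c) :=
  ergodic_rate_theta_one_general L uT τ hτ φ hφ r s c hr hs hc hrs wstar w wt hVI hcorr
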